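/- arXiv:2601.19670 — 6 statements merged into one kernel-verified Lean document; each statement's English description precedes it below -/
import Mathlib

section
/- Let R be an associative unital C-algebra with no zero divisors, equipped with an exhaustive increasing algebra filtration (R_m)_{m in N} (so each R_m is a C-subspace, R_m ⊆ R_{m+1}, 1 ∈ R_0, R_i · R_j ⊆ R_{i+j}, and ∪_m R_m = R). Let Gr R = ⊕_{m≥0} R_m/R_{m−1} (with R_{−1} = 0) be the associated graded algebra, with multiplication induced by that of R. Suppose z_1, …, z_n are central elements of R such that their principal symbols z̄_1, …, z̄_n (the image of z_i in R_{d_i}/R_{d_i−1}, where d_i is minimal with z_i ∈ R_{d_i}) generate the center of Gr R as a C-algebra. Then z_1, …, z_n generate the center Z(R) of R as a C-algebra. (Lemma le:degc of the paper.) -/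
/-- `filPrev F m` is the filtration piece `F (m-1)`, with the convention `F (-1) = ⊥`. -/
def filPrev {R : Type*} [AddCommMonoid R] [Module ℂ R]
    (F : ℕ → Submodule ℂ R) : ℕ → Submodule ℂ R
  | 0 => ⊥
  | (m + 1) => F m

/-!
A central element `f` of filtration degree `m` has a central symbol in `Gr R`, so it agrees
modulo `F (m-1)` with a linear combination `S` of monomials in the `z i`. Since the `z i` are
central, so is `S`, hence `f - S` is a central element of lower degree and induction on the
degree finishes the argument.
-/

section Subalgebra

variable {M A : Type*} [Monoid M] [SetLike A M] [SubmonoidClass A M]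

theorem list_ofFn_pow_prod_mem {n : ℕ} {z : Fin n → M} {S : A} (hz : ∀ i, z i ∈ S)
    (a : Fin n → ℕ) : (List.ofFn fun i => z i ^ a i).prod ∈ S :=
  list_prod_mem fun _ hx => by
    obtain ⟨i, rfl⟩ := List.mem_ofFn.mp hx
    exact pow_mem (hz i) _

theorem sum_smul_list_ofFn_pow_prod_mem {K B : Type*} [CommSemiring K] [Semiring B]
    [Algebra K B] {n : ℕ} {z : Fin n → B} {S : Subalgebra K B} (hz : ∀ i, z i ∈ S)
    (s : Finset (Fin n → ℕ)) (c : (Fin n → ℕ) → K) :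
    ∑ a ∈ s, c a • (List.ofFn fun i => z i ^ a i).prod ∈ S :=
  Subalgebra.sum_mem _ fun a _ => Subalgebra.smul_mem _ (list_ofFn_pow_prod_mem hz a) _

theorem adjoin_range_le_center {K B : Type*} [CommSemiring K] [Semiring B] [Algebra K B]
    {n : ℕ} {z : Fin n → B} (hz_central : ∀ i, ∀ r : B, z i * r = r * z i) :
    Algebra.adjoin K (Set.range z) ≤ Subalgebra.center K B := by
  rw [Algebra.adjoin_le_iff]
  rintro _ ⟨i, rfl⟩
  exact Subalgebra.mem_center_iff.mpr fun r => (hz_central i r).symm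

end Subalgebra

section Filtration

variable {R : Type*} [Ring R] [Algebra ℂ R]

theorem mem_adjoin_of_mem_center_of_mem_filPrev (F : ℕ → Submodule ℂ R)
    {n : ℕ} (z : Fin n → R)
    (hz_central : ∀ i, ∀ r : R, z i * r = r * z i)
    (hgen : ∀ m : ℕ, ∀ f ∈ F m,
      (∀ k : ℕ, ∀ g ∈ F k, f * g - g * f ∈ filPrev F (m + k)) →
      ∃ (s : Finset (Fin n → ℕ)) (c : (Fin n → ℕ) → ℂ),
        f - ∑ a ∈ s, c a • (List.ofFn fun i => z i ^ a i).prod ∈ filPrev F m)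
    (m : ℕ) {f : R} (hf : f ∈ Subalgebra.center ℂ R) (hfm : f ∈ filPrev F m) :
    f ∈ Algebra.adjoin ℂ (Set.range z) := by
  induction m generalizing f with
  | zero =>
    rw [show f = 0 from (Submodule.mem_bot ℂ).mp hfm]
    exact zero_mem _
  | succ m ih =>
    have hcomm : ∀ k : ℕ, ∀ g ∈ F k, f * g - g * f ∈ filPrev F (m + k) := fun k g _ => by
      rw [(Subalgebra.mem_center_iff.mp hf g).symm, sub_self]
      exact zero_mem _
    obtain ⟨s, c, hrest⟩ := hgen m f hfm hcomm
    have hz_adjoin : ∀ i, z i ∈ Algebra.adjoin ℂ (Set.range z) :=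
      fun i => Algebra.subset_adjoin (Set.mem_range_self i)
    have hS_adjoin := sum_smul_list_ofFn_pow_prod_mem hz_adjoin s c
    have hS_center := adjoin_range_le_center hz_central hS_adjoin
    have hlower := ih (sub_mem hf hS_center) hrest
    simpa using add_mem hlower hS_adjoin

end Filtration

theorem center_generated_of_graded_center_generated_general
    {R : Type*} [Ring R] [Algebra ℂ R]
    (F : ℕ → Submodule ℂ R)
    (hexh : ∀ r : R, ∃ m, r ∈ F m)
    (n : ℕ) (z : Fin n → R) (d : Fin n → ℕ)
    (hz_central : ∀ i, ∀ r : R, z i * r = r * z i)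
    (hgen : ∀ m : ℕ, ∀ f ∈ F m,
      (∀ k : ℕ, ∀ g ∈ F k, f * g - g * f ∈ filPrev F (m + k)) →
      ∃ (s : Finset (Fin n → ℕ)) (c : (Fin n → ℕ) → ℂ),
        (∀ a ∈ s, ∑ i, a i * d i = m) ∧
        f - ∑ a ∈ s, c a • (List.ofFn fun i => z i ^ a i).prod ∈ filPrev F m) :
    Subalgebra.center ℂ R = Algebra.adjoin ℂ (Set.range z) := by
  refine le_antisymm (fun f hf => ?_) (adjoin_range_le_center hz_central)
  obtain ⟨m, hm⟩ := hexh f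
  refine mem_adjoin_of_mem_center_of_mem_filPrev F z hz_central ?_ (m + 1) hf hm
  exact fun k g hg hcomm => (hgen k g hg hcomm).imp fun _ ⟨c, _, hc⟩ => ⟨c, hc⟩

/-- Lemma 6.9 (le:degc) of the paper.  Let `R` be an associative unital `ℂ`-algebra with
no zero divisors, equipped with an exhaustive increasing algebra filtration `F`.  Let
`z 1, …, z n` be central elements of `R`, of filtration degrees `d i` (so `z i ∈ F (d i)`
and `z i ∉ F (d i - 1)`).  Suppose that the principal symbols of the `z i` generate the
center of the associated graded algebra `Gr R` as a `ℂ`-algebra; concretely, every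
homogeneous central element of `Gr R` — i.e. every `f ∈ F m` whose commutator with any
`g ∈ F k` lies in `F (m+k-1)` — agrees modulo `F (m-1)` with a `ℂ`-linear combination of
monomials `∏ i, z i ^ a i` of total symbol degree `∑ i, a i * d i = m`.  Then
`z 1, …, z n` generate the center `Z(R)` of `R` as a `ℂ`-algebra. -/
theorem center_generated_of_graded_center_generated
    {R : Type*} [Ring R] [Algebra ℂ R] [NoZeroDivisors R]
    (F : ℕ → Submodule ℂ R)
    (hmono : Monotone F)
    (hone : (1 : R) ∈ F 0)
    (hmul : ∀ i j : ℕ, ∀ x ∈ F i, ∀ y ∈ F j, x * y ∈ F (i + j))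
    (hexh : ∀ r : R, ∃ m, r ∈ F m)
    (n : ℕ) (z : Fin n → R) (d : Fin n → ℕ)
    (hz_central : ∀ i, ∀ r : R, z i * r = r * z i)
    (hz_deg : ∀ i, z i ∈ F (d i))
    (hz_min : ∀ i, z i ∉ filPrev F (d i))
    (hgen : ∀ m : ℕ, ∀ f ∈ F m,
      (∀ k : ℕ, ∀ g ∈ F k, f * g - g * f ∈ filPrev F (m + k)) →
      ∃ (s : Finset (Fin n → ℕ)) (c : (Fin n → ℕ) → ℂ),
        (∀ a ∈ s, ∑ i, a i * d i = m) ∧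
        f - ∑ a ∈ s, c a • (List.ofFn fun i => z i ^ a i).prod ∈ filPrev F m) :
    Subalgebra.center ℂ R = Algebra.adjoin ℂ (Set.range z) :=
  center_generated_of_graded_center_generated_general F hexh n z d hz_central hgen
end

section
/- Let R be a commutative C-algebra that is an integral domain, equipped with a Poisson bracket {·,·} and an exhaustive increasing filtration (R_m)_{m in N} by C-subspaces with 1 ∈ R_0, R_i · R_j ⊆ R_{i+j}, {R_i, R_j} ⊆ R_{i+j}, and ∪_m R_m = R; then the associated graded algebra Gr R = ⊕_{m≥0} R_m/R_{m−1} carries an induced product and an induced Poisson bracket. Suppose z_1, …, z_n belong to the Poisson center Z(R) = {f ∈ R : {f,g} = 0 for all g ∈ R} and their principal symbols z̄_1, …, z̄_n generate the Poisson center of Gr R as a C-algebra. Then z_1, …, z_n generate the Poisson center Z(R) as a C-algebra. (Lemma le:fpa of the paper.) -/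
/-- Lemma 8.3 (le:fpa) of the paper.  Let `R` be a commutative `ℂ`-algebra which is an
integral domain, equipped with a Poisson bracket `P` and an exhaustive increasing
filtration `F` compatible with both the product and the bracket.  Let `z 1, …, z n`
belong to the Poisson center of `R`, with filtration degrees `d i`, and suppose their
principal symbols generate the Poisson center of the associated graded Poisson algebra
`Gr R` as a `ℂ`-algebra; concretely, every `f ∈ F m` with `{f, g} ∈ F (m+k-1)` for all
`g ∈ F k` agrees modulo `F (m-1)` with a `ℂ`-linear combination of monomials
`∏ i, z i ^ a i` of total symbol degree `∑ i, a i * d i = m`.  Then `z 1, …, z n`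
generate the Poisson center `Z(R) = {f : {f,g} = 0 ∀ g}` of `R` as a `ℂ`-algebra. -/
theorem poisson_center_generated_of_graded_poisson_center_generated
    {R : Type*} [CommRing R] [IsDomain R] [Algebra ℂ R]
    (P : R →ₗ[ℂ] R →ₗ[ℂ] R)
    (hanti : ∀ f g : R, P f g = - P g f)
    (hjacobi : ∀ f g h : R, P f (P g h) + P g (P h f) + P h (P f g) = 0)
    (hleibniz : ∀ f g h : R, P (f * g) h = f * P g h + g * P f h)
    (F : ℕ → Submodule ℂ R)
    (hmono : Monotone F)
    (hone : (1 : R) ∈ F 0)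
    (hmul : ∀ i j : ℕ, ∀ x ∈ F i, ∀ y ∈ F j, x * y ∈ F (i + j))
    (hbra : ∀ i j : ℕ, ∀ x ∈ F i, ∀ y ∈ F j, P x y ∈ F (i + j))
    (hexh : ∀ r : R, ∃ m, r ∈ F m)
    (n : ℕ) (z : Fin n → R) (d : Fin n → ℕ)
    (hz_central : ∀ i, ∀ g : R, P (z i) g = 0)
    (hz_deg : ∀ i, z i ∈ F (d i))
    (hz_min : ∀ i, z i ∉ filPrev F (d i))
    (hgen : ∀ m : ℕ, ∀ f ∈ F m,
      (∀ k : ℕ, ∀ g ∈ F k, P f g ∈ filPrev F (m + k)) →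
      ∃ (s : Finset (Fin n → ℕ)) (c : (Fin n → ℕ) → ℂ),
        (∀ a ∈ s, ∑ i, a i * d i = m) ∧
        f - ∑ a ∈ s, c a • ∏ i, z i ^ a i ∈ filPrev F m) :
    {f : R | ∀ g : R, P f g = 0} = (Algebra.adjoin ℂ (Set.range z) : Set R) := by
  classical
  set A := Algebra.adjoin ℂ (Set.range z) with hA
  have hP1 : ∀ g : R, P 1 g = 0 := by
    intro g
    have h := hleibniz 1 1 g
    simp only [one_mul] at h
    exact (add_eq_right.mp h.symm)
  have hC : ∀ f ∈ A, ∀ g : R, P f g = 0 := by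
    intro f hf
    induction hf using Algebra.adjoin_induction with
    | mem x hx =>
      obtain ⟨i, rfl⟩ := hx
      exact hz_central i
    | algebraMap c =>
      intro g
      rw [Algebra.algebraMap_eq_smul_one]
      simp [map_smul, hP1 g]
    | add x y _ _ hx hy =>
      intro g
      simp [map_add, hx g, hy g]
    | mul x y _ _ hx hy =>
      intro g
      rw [hleibniz x y g, hx g, hy g]
      ring
  have hsum_mem : ∀ (s : Finset (Fin n → ℕ)) (c : (Fin n → ℕ) → ℂ),
      (∑ a ∈ s, c a • ∏ i, z i ^ a i) ∈ A := by
    intro s c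
    refine Subalgebra.sum_mem A fun a _ => Subalgebra.smul_mem A ?_ _
    exact Subalgebra.prod_mem A fun i _ =>
      Subalgebra.pow_mem A (Algebra.subset_adjoin ⟨i, rfl⟩) _
  have main : ∀ m : ℕ, ∀ f ∈ F m, (∀ g : R, P f g = 0) → f ∈ A := by
    intro m
    induction m with
    | zero =>
      intro f hf hc
      obtain ⟨s, c, _, hrem⟩ := hgen 0 f hf (fun k g _ => by rw [hc]; exact Submodule.zero_mem _)
      have hzero : f - ∑ a ∈ s, c a • ∏ i, z i ^ a i = 0 := by
        simpa [filPrev] using hrem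
      have : f = ∑ a ∈ s, c a • ∏ i, z i ^ a i := by
        have := sub_eq_zero.mp hzero; exact this
      rw [this]; exact hsum_mem s c
    | succ m ih =>
      intro f hf hc
      obtain ⟨s, c, _, hrem⟩ := hgen (m + 1) f hf
        (fun k g _ => by rw [hc]; exact Submodule.zero_mem _)
      have hremF : f - ∑ a ∈ s, c a • ∏ i, z i ^ a i ∈ F m := hrem
      have hcent : ∀ g : R, P (f - ∑ a ∈ s, c a • ∏ i, z i ^ a i) g = 0 := by
        intro g
        have hs := hC _ (hsum_mem s c) g
        rw [map_sub, LinearMap.sub_apply, hc g, hs, sub_zero]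
      have hin := ih _ hremF hcent
      have : f = (f - ∑ a ∈ s, c a • ∏ i, z i ^ a i) + ∑ a ∈ s, c a • ∏ i, z i ^ a i := by
        ring
      rw [this]
      exact Subalgebra.add_mem A hin (hsum_mem s c)
  ext f
  constructor
  · intro hf
    obtain ⟨m, hm⟩ := hexh f
    exact main m f hm hf
  · intro hf
    exact hC f hf
end

section
/- Let ℓ ≥ 3 be an odd integer and let v ∈ C be a primitive ℓ-th root of unity. Then ∑_{r=1}^{ℓ−1} (−1)^r · v^r / ( (v − v^{−1})^ℓ · [r]_v! · [ℓ−r]_v! ) = (1 − ℓ)/(2ℓ). (Lemma 7.2 / lem:vbinom of the paper; note that [r]_v! ≠ 0 for 0 ≤ r ≤ ℓ−1 since ℓ is odd.) -/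
/-- The quantum integer `[m]_q = (q^m - q^{-m})/(q - q^{-1})`. -/
noncomputable def qInt (q : ℂ) (m : ℕ) : ℂ := (q ^ m - q⁻¹ ^ m) / (q - q⁻¹)

/-- The quantum factorial `[m]_q! = ∏_{s=1}^m [s]_q`. -/
noncomputable def qFact (q : ℂ) (m : ℕ) : ℂ := ∏ s ∈ Finset.range m, qInt q (s + 1)

/-- Auxiliary product `∏_{s=1}^m (v^s - v^{-s})`. -/
noncomputable def qP (v : ℂ) (m : ℕ) : ℂ := ∏ s ∈ Finset.range m, (v ^ (s + 1) - v⁻¹ ^ (s + 1))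

lemma aux_ne {ℓ : ℕ} {v : ℂ} (hodd : Odd ℓ) (hl : 3 ≤ ℓ) (hv : IsPrimitiveRoot v ℓ)
    {r : ℕ} (hr : ¬ ℓ ∣ r) : v ^ r - v⁻¹ ^ r ≠ 0 := by
  have hℓ0 : ℓ ≠ 0 := by omega
  have hv0 : v ≠ 0 := hv.ne_zero hℓ0
  rw [inv_pow, sub_ne_zero]
  intro h
  have h2 : v ^ (r * 2) = 1 := by
    rw [mul_comm, two_mul, pow_add]
    nth_rewrite 1 [h]
    exact inv_mul_cancel₀ (pow_ne_zero _ hv0)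
  have hdvd := (hv.pow_eq_one_iff_dvd _).1 h2
  have hcop : Nat.Coprime ℓ 2 := Nat.coprime_two_right.mpr hodd
  exact hr (hcop.dvd_of_dvd_mul_right hdvd)

lemma qFact_eq {v : ℂ} (m : ℕ) : qFact v m = qP v m / (v - v⁻¹) ^ m := by
  simp only [qFact, qInt, qP, Finset.prod_div_distrib, Finset.prod_const, Finset.card_range]

lemma qP_top {ℓ : ℕ} {v : ℂ} (hodd : Odd ℓ) (hl : 3 ≤ ℓ) (hv : IsPrimitiveRoot v ℓ) :
    qP v (ℓ - 1) = ℓ := by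
  have hℓ0 : ℓ ≠ 0 := by omega
  have hv0 : v ≠ 0 := hv.ne_zero hℓ0
  have hw : IsPrimitiveRoot (v ^ 2) ℓ :=
    hv.pow_of_coprime 2 (Nat.coprime_two_left.mpr hodd)
  have hfac : ∀ s : ℕ, v ^ (s + 1) - v⁻¹ ^ (s + 1)
      = v⁻¹ ^ (s + 1) * ((v ^ 2) ^ (s + 1) - 1) := by
    intro s
    have hp : v ^ (s + 1) ≠ 0 := pow_ne_zero _ hv0
    rw [inv_pow, ← pow_mul]
    field_simp
    ring
  rw [qP, Finset.prod_congr rfl (fun s _ => hfac s), Finset.prod_mul_distrib]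
  obtain ⟨n, rfl⟩ : ∃ n, ℓ = n + 1 := ⟨ℓ - 1, by omega⟩
  simp only [Nat.add_sub_cancel]
  have h1 : ∏ s ∈ Finset.range n, v⁻¹ ^ (s + 1) = 1 := by
    rw [Finset.prod_pow_eq_pow_sum]
    have hsum : ∑ s ∈ Finset.range n, (s + 1) = ∑ i ∈ Finset.range (n + 1), i := by
      rw [Finset.sum_range_succ' (fun i => i) n]; simp
    have hdvd : (n + 1) ∣ ∑ s ∈ Finset.range n, (s + 1) := by
      have hg := Finset.sum_range_id_mul_two (n + 1)
      have hcop : Nat.Coprime (n + 1) 2 := Nat.coprime_two_right.mpr hodd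
      apply hcop.dvd_of_dvd_mul_right
      rw [hsum, hg]
      exact dvd_mul_right _ _
    obtain ⟨c, hc⟩ := hdvd
    rw [hc, pow_mul, inv_pow, hv.pow_eq_one, inv_one, one_pow]
  rw [h1, one_mul]
  have hkey := hw.prod_pow_sub_one_eq_order
  have hneg : ((-1 : ℂ)) ^ n = 1 := by
    have he : Even n := by rcases hodd with ⟨k, hk⟩; exact ⟨k, by omega⟩
    exact he.neg_one_pow
  rw [hneg, one_mul] at hkey
  rw [hkey]
  push_cast
  ring

lemma qP_mul {ℓ : ℕ} {v : ℂ} (hodd : Odd ℓ) (hl : 3 ≤ ℓ) (hv : IsPrimitiveRoot v ℓ) :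
    ∀ r : ℕ, 1 ≤ r → r < ℓ →
      qP v r * qP v (ℓ - r) = (-1) ^ (r + 1) * ℓ * (v ^ r - v⁻¹ ^ r) := by
  have hℓ0 : ℓ ≠ 0 := by omega
  have hv0 : v ≠ 0 := hv.ne_zero hℓ0
  intro r hr1
  induction r, hr1 using Nat.le_induction with
  | base =>
    intro _
    have h1 : qP v 1 = v - v⁻¹ := by simp [qP]
    rw [h1, qP_top hodd hl hv]
    ring
  | succ r hr ih =>
    intro hrlt
    have hrl : r < ℓ := by omega
    have hpow1 : v ^ (ℓ - r) = v⁻¹ ^ r := by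
      have h : v ^ (ℓ - r) * v ^ r = 1 := by
        rw [← pow_add, Nat.sub_add_cancel hrl.le, hv.pow_eq_one]
      rw [inv_pow]
      exact eq_inv_of_mul_eq_one_left h
    have hpow2 : v⁻¹ ^ (ℓ - r) = v ^ r := by
      rw [inv_pow, hpow1, inv_pow, inv_inv]
    have hsplit : qP v (ℓ - r) = qP v (ℓ - (r + 1)) * (v⁻¹ ^ r - v ^ r) := by
      have : ℓ - r = (ℓ - (r + 1)) + 1 := by omega
      rw [this, qP, Finset.prod_range_succ, ← qP]
      congr 1
      rw [show ℓ - (r + 1) + 1 = ℓ - r by omega, hpow1, hpow2]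
    have hd : v ^ r - v⁻¹ ^ r ≠ 0 := by
      apply aux_ne hodd hl hv
      intro hdvd
      have := Nat.le_of_dvd (by omega) hdvd
      omega
    have key : qP v r * qP v (ℓ - (r + 1)) = (-1) ^ r * ℓ := by
      apply mul_right_cancel₀ (neg_ne_zero.mpr hd)
      have ihr := ih hrl
      rw [hsplit] at ihr
      calc qP v r * qP v (ℓ - (r + 1)) * -(v ^ r - v⁻¹ ^ r)
          = qP v r * (qP v (ℓ - (r + 1)) * (v⁻¹ ^ r - v ^ r)) := by ring
        _ = (-1) ^ (r + 1) * ℓ * (v ^ r - v⁻¹ ^ r) := ihr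
        _ = (-1) ^ r * ℓ * -(v ^ r - v⁻¹ ^ r) := by ring
    rw [qP, Finset.prod_range_succ, ← qP]
    calc qP v r * (v ^ (r + 1) - v⁻¹ ^ (r + 1)) * qP v (ℓ - (r + 1))
        = qP v r * qP v (ℓ - (r + 1)) * (v ^ (r + 1) - v⁻¹ ^ (r + 1)) := by ring
      _ = (-1) ^ r * ℓ * (v ^ (r + 1) - v⁻¹ ^ (r + 1)) := by rw [key]
      _ = (-1) ^ (r + 1 + 1) * ℓ * (v ^ (r + 1) - v⁻¹ ^ (r + 1)) := by ring

lemma qFact_mul_pow {v : ℂ} (h01 : v - v⁻¹ ≠ 0) (m : ℕ) :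
    qFact v m * (v - v⁻¹) ^ m = qP v m := by
  rw [qFact_eq, div_mul_cancel₀ _ (pow_ne_zero _ h01)]

/-- Lemma 7.2 (lem:vbinom): for an odd `ℓ ≥ 3` and a primitive `ℓ`-th root of unity `v`,
`∑_{r=1}^{ℓ-1} (-1)^r v^r / ((v - v^{-1})^ℓ [r]_v! [ℓ-r]_v!) = (1 - ℓ)/(2ℓ)`. -/
theorem vbinom_sum (ℓ : ℕ) (hodd : Odd ℓ) (hl : 3 ≤ ℓ) (v : ℂ)
    (hv : IsPrimitiveRoot v ℓ) :
    ∑ r ∈ Finset.Ico 1 ℓ,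
        (-1 : ℂ) ^ r * v ^ r / ((v - v⁻¹) ^ ℓ * qFact v r * qFact v (ℓ - r))
      = (1 - (ℓ : ℂ)) / (2 * ℓ) := by
  have hℓ0 : ℓ ≠ 0 := by omega
  have hv0 : v ≠ 0 := hv.ne_zero hℓ0
  have hℓC : (ℓ : ℂ) ≠ 0 := Nat.cast_ne_zero.mpr hℓ0
  have h01 : v - v⁻¹ ≠ 0 := by
    have := aux_ne hodd hl hv (r := 1) (by rw [Nat.dvd_one]; omega)
    simpa using this
  have hdne : ∀ r : ℕ, 1 ≤ r → r < ℓ → v ^ r - v⁻¹ ^ r ≠ 0 := by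
    intro r h1 h2
    apply aux_ne hodd hl hv
    intro hdvd
    have := Nat.le_of_dvd (by omega) hdvd
    omega
  have hpow1 : ∀ r : ℕ, r ≤ ℓ → v ^ (ℓ - r) = v⁻¹ ^ r := by
    intro r hrl
    have h : v ^ (ℓ - r) * v ^ r = 1 := by
      rw [← pow_add, Nat.sub_add_cancel hrl, hv.pow_eq_one]
    rw [inv_pow]
    exact eq_inv_of_mul_eq_one_left h
  have hpow2 : ∀ r : ℕ, r ≤ ℓ → v⁻¹ ^ (ℓ - r) = v ^ r := by
    intro r hrl
    rw [inv_pow, hpow1 r hrl, inv_pow, inv_inv]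
  have hterm : ∀ r ∈ Finset.Ico 1 ℓ,
      (-1 : ℂ) ^ r * v ^ r / ((v - v⁻¹) ^ ℓ * qFact v r * qFact v (ℓ - r))
      = -(ℓ : ℂ)⁻¹ * (v ^ r * (v ^ r - v⁻¹ ^ r)⁻¹) := by
    intro r hr
    rw [Finset.mem_Ico] at hr
    have hd := hdne r hr.1 hr.2
    have hD : (v - v⁻¹) ^ ℓ * qFact v r * qFact v (ℓ - r)
        = (-1) ^ (r + 1) * ℓ * (v ^ r - v⁻¹ ^ r) := by
      apply mul_right_cancel₀ (pow_ne_zero ℓ h01)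
      have hp : (v - v⁻¹) ^ r * (v - v⁻¹) ^ (ℓ - r) = (v - v⁻¹) ^ ℓ := by
        rw [← pow_add]
        congr 1
        omega
      calc (v - v⁻¹) ^ ℓ * qFact v r * qFact v (ℓ - r) * (v - v⁻¹) ^ ℓ
          = (v - v⁻¹) ^ ℓ * ((qFact v r * (v - v⁻¹) ^ r)
              * (qFact v (ℓ - r) * (v - v⁻¹) ^ (ℓ - r))) := by rw [← hp]; ring
        _ = (v - v⁻¹) ^ ℓ * (qP v r * qP v (ℓ - r)) := by
              rw [qFact_mul_pow h01, qFact_mul_pow h01]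
        _ = (v - v⁻¹) ^ ℓ * ((-1) ^ (r + 1) * ℓ * (v ^ r - v⁻¹ ^ r)) := by
              rw [qP_mul hodd hl hv r hr.1 hr.2]
        _ = (-1) ^ (r + 1) * ℓ * (v ^ r - v⁻¹ ^ r) * (v - v⁻¹) ^ ℓ := by ring
    rw [hD]
    set d := v ^ r - v⁻¹ ^ r with hd_def
    clear_value d
    have h3 : (-1 : ℂ) ^ (r + 1) * ℓ * d ≠ 0 :=
      mul_ne_zero (mul_ne_zero (pow_ne_zero _ (by norm_num)) hℓC) hd
    rw [div_eq_iff h3]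
    field_simp
    ring
  rw [Finset.sum_congr rfl hterm, ← Finset.mul_sum]
  have hT : ∑ r ∈ Finset.Ico 1 ℓ, v ^ r * (v ^ r - v⁻¹ ^ r)⁻¹ = ((ℓ : ℂ) - 1) / 2 := by
    have hre : ∑ r ∈ Finset.Ico 1 ℓ, v ^ r * (v ^ r - v⁻¹ ^ r)⁻¹
        = ∑ r ∈ Finset.Ico 1 ℓ, v ^ (ℓ - r) * (v ^ (ℓ - r) - v⁻¹ ^ (ℓ - r))⁻¹ := by
      apply Finset.sum_nbij' (fun r => ℓ - r) (fun r => ℓ - r)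
      · intro a ha; rw [Finset.mem_Ico] at *; omega
      · intro a ha; rw [Finset.mem_Ico] at *; omega
      · intro a ha; rw [Finset.mem_Ico] at ha; omega
      · intro a ha; rw [Finset.mem_Ico] at ha; omega
      · intro a ha
        rw [Finset.mem_Ico] at ha
        rw [show ℓ - (ℓ - a) = a by omega]
    have h2 : (∑ r ∈ Finset.Ico 1 ℓ, v ^ r * (v ^ r - v⁻¹ ^ r)⁻¹) * 2 = (ℓ : ℂ) - 1 := by
      calc (∑ r ∈ Finset.Ico 1 ℓ, v ^ r * (v ^ r - v⁻¹ ^ r)⁻¹) * 2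
          = (∑ r ∈ Finset.Ico 1 ℓ, v ^ r * (v ^ r - v⁻¹ ^ r)⁻¹)
            + (∑ r ∈ Finset.Ico 1 ℓ, v ^ (ℓ - r) * (v ^ (ℓ - r) - v⁻¹ ^ (ℓ - r))⁻¹) := by
            rw [← hre]; ring
        _ = ∑ r ∈ Finset.Ico 1 ℓ, (1 : ℂ) := by
            rw [← Finset.sum_add_distrib]
            apply Finset.sum_congr rfl
            intro r hr
            rw [Finset.mem_Ico] at hr
            rw [hpow1 r hr.2.le, hpow2 r hr.2.le]
            have hd := hdne r hr.1 hr.2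
            set a := v ^ r
            set b := v⁻¹ ^ r
            clear_value a b
            rw [show b - a = -(a - b) by ring, inv_neg]
            calc a * (a - b)⁻¹ + b * -(a - b)⁻¹ = (a - b) * (a - b)⁻¹ := by ring
              _ = 1 := mul_inv_cancel₀ hd
        _ = (ℓ : ℂ) - 1 := by
            rw [Finset.sum_const, Nat.card_Ico, nsmul_eq_mul, mul_one]
            push_cast [Nat.cast_sub (by omega : 1 ≤ ℓ)]
            ring
    rw [eq_div_iff (by norm_num : (2 : ℂ) ≠ 0)]
    exact h2
  rw [hT]
  have h2l : (2 : ℂ) * ℓ ≠ 0 := by simp [hℓC]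
  rw [eq_div_iff h2l]
  calc -(ℓ : ℂ)⁻¹ * (((ℓ : ℂ) - 1) / 2) * (2 * ℓ)
      = (1 - (ℓ : ℂ)) * ((ℓ : ℂ) * (ℓ : ℂ)⁻¹) := by ring
    _ = 1 - (ℓ : ℂ) := by rw [mul_inv_cancel₀ hℓC, mul_one]
end

section
/- Let ℓ ≥ 3 be an odd integer, let v ∈ C be a primitive ℓ-th root of unity, and let a be an integer with 0 ≤ a ≤ ℓ. Then in the polynomial ring C[x] one has P_a(x) · P_{ℓ−a}(x) = P_ℓ(x), where P_m are the idivided-power polynomials at v. (This is the first identity of Lemma 7.3 / lem:prodBB of the paper: in the split rank-one iquantum group at the root of unity v, the element B_i generates a free polynomial algebra and B_i^{[m]} = P_m(B_i), so the lemma's identity B_i^{[a]} B_i^{[ℓ−a]} = B_i^{[ℓ]} is equivalent to this polynomial identity.) -/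
open Polynomial

/-- The idivided-power polynomials at `v`:
`P_{2k}(x) = ∏_{r=1}^{k} (x² + (v - v⁻¹)² [2r-1]_v²)` and
`P_{2k+1}(x) = x ∏_{r=1}^{k} (x² + (v - v⁻¹)² [2r]_v²)`. -/
noncomputable def iDP (v : ℂ) (m : ℕ) : Polynomial ℂ :=
  if m % 2 = 0 then
    ∏ r ∈ Finset.range (m / 2), (X ^ 2 + C ((v - v⁻¹) ^ 2 * qInt v (2 * r + 1) ^ 2))
  else
    X * ∏ r ∈ Finset.range (m / 2), (X ^ 2 + C ((v - v⁻¹) ^ 2 * qInt v (2 * r + 2) ^ 2))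

lemma qInt_sub (v : ℂ) (hv0 : v ≠ 0) (ℓ m : ℕ) (hvl : v ^ ℓ = 1) (hm : m ≤ ℓ) :
    qInt v (ℓ - m) = - qInt v m := by
  have h1 : v ^ (ℓ - m) = v⁻¹ ^ m := by
    rw [pow_sub₀ v hv0 hm, hvl, inv_pow]; ring
  have h2 : v⁻¹ ^ (ℓ - m) = v ^ m := by
    rw [pow_sub₀ v⁻¹ (inv_ne_zero hv0) hm, inv_pow, hvl, inv_one, inv_pow, inv_inv]; ring
  unfold qInt
  rw [h1, h2]
  ring

lemma key (v : ℂ) (hv0 : v ≠ 0) (p q : ℕ) (hvl : v ^ (2 * (p + q) + 1) = 1) :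
    iDP v (2 * p) * iDP v (2 * q + 1) = iDP v (2 * (p + q) + 1) := by
  set f : ℕ → Polynomial ℂ := fun m => X ^ 2 + C ((v - v⁻¹) ^ 2 * qInt v m ^ 2) with hf
  have hg : ∀ m ≤ 2 * (p + q) + 1, f (2 * (p + q) + 1 - m) = f m := by
    intro m hm
    simp only [hf, qInt_sub v hv0 _ m hvl hm, neg_sq]
  rw [iDP, iDP, iDP]
  rw [if_pos (by omega : (2 * p) % 2 = 0), if_neg (by omega : ¬ (2 * q + 1) % 2 = 0),
    if_neg (by omega : ¬ (2 * (p + q) + 1) % 2 = 0)]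
  have d1 : 2 * p / 2 = p := by omega
  have d2 : (2 * q + 1) / 2 = q := by omega
  have d3 : (2 * (p + q) + 1) / 2 = q + p := by omega
  rw [d1, d2, d3, Finset.prod_range_add]
  have : ∀ i ∈ Finset.range p,
      f (2 * (q + i) + 2) = f (2 * (p - 1 - i) + 1) := by
    intro i hi
    simp only [Finset.mem_range] at hi
    have h1 : 2 * (p - 1 - i) + 1 = 2 * (p + q) + 1 - (2 * (q + i) + 2) := by omega
    rw [h1, hg _ (by omega)]
  calc (∏ r ∈ Finset.range p, f (2 * r + 1)) * (X * ∏ r ∈ Finset.range q, f (2 * r + 2))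
      = X * ((∏ r ∈ Finset.range q, f (2 * r + 2)) *
          ∏ i ∈ Finset.range p, f (2 * (p - 1 - i) + 1)) := by
        rw [← Finset.prod_range_reflect (fun r => f (2 * r + 1)) p]; ring
    _ = X * ((∏ r ∈ Finset.range q, f (2 * r + 2)) *
          ∏ i ∈ Finset.range p, f (2 * (q + i) + 2)) := by
        rw [Finset.prod_congr rfl this]

/-- First identity of Lemma 7.3 (lem:prodBB): for an odd `ℓ ≥ 3`, a primitive `ℓ`-th
root of unity `v`, and `0 ≤ a ≤ ℓ`, one has `P_a · P_{ℓ-a} = P_ℓ` in `ℂ[x]`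
(i.e. `B_i^{[a]} B_i^{[ℓ-a]} = B_i^{[ℓ]}` in the split rank-one iquantum group at `v`). -/
theorem iDP_mul_self_ell (ℓ : ℕ) (hodd : Odd ℓ) (hl : 3 ≤ ℓ) (v : ℂ)
    (hv : IsPrimitiveRoot v ℓ) (a : ℕ) (ha : a ≤ ℓ) :
    iDP v a * iDP v (ℓ - a) = iDP v ℓ := by
  have hv0 : v ≠ 0 := hv.ne_zero (by omega)
  have hvl : v ^ ℓ = 1 := hv.pow_eq_one
  obtain ⟨k, hk⟩ := hodd
  rcases Nat.even_or_odd a with he | ho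
  · obtain ⟨p, hp⟩ := he
    have hq : ℓ - a = 2 * (k - p) + 1 := by omega
    have hl' : ℓ = 2 * (p + (k - p)) + 1 := by omega
    rw [hq, show a = 2 * p by omega, hl']
    exact key v hv0 p (k - p) (hl' ▸ hvl)
  · obtain ⟨p, hp⟩ := ho
    have hq : ℓ - a = 2 * (k - p) := by omega
    have hl' : ℓ = 2 * ((k - p) + p) + 1 := by omega
    rw [hq, show a = 2 * p + 1 by omega, hl', mul_comm]
    exact key v hv0 (k - p) p (hl' ▸ hvl)
end

section
/- Let ℓ ≥ 3 be an odd integer, let v ∈ C be a primitive ℓ-th root of unity, and let a be an integer with 0 ≤ a ≤ 2ℓ. Then in the polynomial ring C[x] one has P_a(x) · P_{2ℓ−a}(x) = P_{2ℓ}(x), where P_m are the idivided-power polynomials at v. (This is the second identity of Lemma 7.3 / lem:prodBB of the paper, stated as B_i^{[a]} B_i^{[2ℓ−a]} = B_i^{[2ℓ]} in the split rank-one iquantum group at v, where B_i generates a free polynomial algebra and B_i^{[m]} = P_m(B_i).) -/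
/-!
Write `Q_m = x² + (v - v⁻¹)² [m]_v²`, so that `P_{2k} = ∏_{r<k} Q_{2r+1}` and
`P_{2k+1} = x ∏_{r<k} Q_{2r+2}`. When `v^ℓ = 1`, `Q_m` only depends on `m mod ℓ`, and
`Q_{2ℓ-m} = Q_m` because `[2ℓ-m]_v = -[m]_v`. This reflection symmetry makes the factors of
`P_a` and `P_{2ℓ-a}` fit together into those of `P_{2ℓ}` for even `a`, and into
`x² ∏_{r<ℓ-1} Q_{2r+2} = ∏_{r<ℓ} Q_{2r}` for odd `a`. As `ℓ` is odd, the odd numbers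
`1, 3, …, 2ℓ-1` and the even numbers `0, 2, …, 2ℓ-2` both run once through all residues mod `ℓ`,
so the latter product is again `P_{2ℓ}`.
-/

open Polynomial

open Finset

noncomputable def iDPFactor (v : ℂ) (m : ℕ) : ℂ[X] :=
  X ^ 2 + C ((v - v⁻¹) ^ 2 * qInt v m ^ 2)

lemma iDPFactor_zero (v : ℂ) : iDPFactor v 0 = X ^ 2 := by
  simp [iDPFactor, qInt]

lemma iDP_two_mul (v : ℂ) (k : ℕ) :
    iDP v (2 * k) = ∏ r ∈ range k, iDPFactor v (2 * r + 1) := by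
  simp [iDP, iDPFactor]

lemma iDP_two_mul_add_one (v : ℂ) (k : ℕ) :
    iDP v (2 * k + 1) = X * ∏ r ∈ range k, iDPFactor v (2 * r + 2) := by
  simp [iDP, iDPFactor, Nat.add_mod, Nat.add_div]

section RootOfUnity

variable {v : ℂ} {n : ℕ}

lemma qInt_add_of_pow_eq_one (hv : v ^ n = 1) (m : ℕ) : qInt v (n + m) = qInt v m := by
  simp [qInt, pow_add, hv]

lemma qInt_sub_of_pow_eq_one (hv0 : v ≠ 0) (hv : v ^ n = 1) {m : ℕ} (hm : m ≤ n) :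
    qInt v (n - m) = -qInt v m := by
  have hvinv : v⁻¹ ^ n = 1 := by rw [inv_pow, hv, inv_one]
  simp only [qInt, pow_sub₀ v hv0 hm, pow_sub₀ v⁻¹ (inv_ne_zero hv0) hm, hv, hvinv, inv_inv,
    one_mul, inv_pow]
  ring

lemma iDPFactor_periodic (hv : v ^ n = 1) : Function.Periodic (iDPFactor v) n := fun m => by
  simp only [iDPFactor, add_comm m, qInt_add_of_pow_eq_one hv]

lemma iDPFactor_sub_of_pow_eq_one (hv0 : v ≠ 0) (hv : v ^ n = 1) {m : ℕ} (hm : m ≤ n) :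
    iDPFactor v (n - m) = iDPFactor v m := by
  simp only [iDPFactor, qInt_sub_of_pow_eq_one hv0 hv hm, neg_sq]

end RootOfUnity

section Products

variable {M : Type*} [CommMonoid M] {n : ℕ}

lemma prod_range_mul_prod_range_sub_of_symm (G : ℕ → M) {k : ℕ} (hk : k ≤ n)
    (hsym : ∀ r < n, G r = G (n - 1 - r)) :
    (∏ r ∈ range k, G r) * ∏ r ∈ range (n - k), G r = ∏ r ∈ range n, G r := by
  conv_rhs => rw [← Nat.add_sub_cancel' hk, prod_range_add]
  congr 1
  rw [← prod_range_reflect]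
  refine prod_congr rfl fun j hj => ?_
  rw [mem_range] at hj
  rw [hsym (k + j) (by omega)]
  congr 1
  omega

/-- Since `2` is invertible modulo an odd `n`, `r ↦ 2r + c` permutes the residues mod `n`. -/
lemma prod_range_two_mul_add_of_periodic {f : ℕ → M} (hn : Odd n) (hf : Function.Periodic f n)
    (c : ℕ) : ∏ r ∈ range n, f (2 * r + c) = ∏ j ∈ range n, f j := by
  have hpos : 0 < n := hn.pos
  have hmaps : ∀ r ∈ range n, (2 * r + c) % n ∈ range n :=
    fun r _ => mem_range.2 (Nat.mod_lt _ hpos)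
  have hinj : Set.InjOn (fun r => (2 * r + c) % n) (range n) := by
    intro r hr s hs hrs
    simp only [coe_range, Set.mem_Iio] at hr hs
    have hcongr : 2 * r + c ≡ 2 * s + c [MOD n] := hrs
    exact ((hcongr.add_right_cancel' c).cancel_left_of_coprime hn.coprime_two_right).eq_of_lt_of_lt
      hr hs
  refine prod_nbij (fun r => (2 * r + c) % n) hmaps hinj
    (surjOn_of_injOn_of_card_le _ hmaps hinj le_rfl) fun r _ => (hf.map_mod_nat _).symm

end Products

lemma iDP_two_mul_eq_sq_mul {ℓ : ℕ} (hodd : Odd ℓ) {v : ℂ} (hv : v ^ ℓ = 1) :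
    iDP v (2 * ℓ) = X ^ 2 * ∏ r ∈ range (ℓ - 1), iDPFactor v (2 * r + 2) := by
  have hperiodic := iDPFactor_periodic hv
  calc iDP v (2 * ℓ) = ∏ r ∈ range ℓ, iDPFactor v (2 * r + 1) := iDP_two_mul v ℓ
    _ = ∏ r ∈ range ℓ, iDPFactor v (2 * r + 0) :=
      (prod_range_two_mul_add_of_periodic hodd hperiodic 1).trans
        (prod_range_two_mul_add_of_periodic hodd hperiodic 0).symm
    _ = X ^ 2 * ∏ r ∈ range (ℓ - 1), iDPFactor v (2 * r + 2) := by
      rw [← Nat.sub_add_cancel hodd.pos, prod_range_succ', mul_comm, Nat.add_sub_cancel]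
      simp [iDPFactor_zero, mul_add]

theorem iDP_mul_self_two_ell_general (ℓ : ℕ) (hodd : Odd ℓ) (v : ℂ)
    (hv : IsPrimitiveRoot v ℓ) (a : ℕ) (ha : a ≤ 2 * ℓ) :
    iDP v a * iDP v (2 * ℓ - a) = iDP v (2 * ℓ) := by
  have hv1 : v ^ ℓ = 1 := hv.pow_eq_one
  have hv0 : v ≠ 0 := hv.ne_zero hodd.pos.ne'
  have hv2 : v ^ (2 * ℓ) = 1 := by rw [pow_mul', hv1, one_pow]
  have hsymm (c : ℕ) (r : ℕ) (hr : 2 * r + c ≤ 2 * ℓ) :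
      iDPFactor v (2 * r + c) = iDPFactor v (2 * ℓ - (2 * r + c)) :=
    (iDPFactor_sub_of_pow_eq_one hv0 hv2 hr).symm
  obtain ⟨k, rfl | rfl⟩ := Nat.even_or_odd' a
  · rw [show 2 * ℓ - 2 * k = 2 * (ℓ - k) by omega, iDP_two_mul, iDP_two_mul, iDP_two_mul]
    refine prod_range_mul_prod_range_sub_of_symm _ (by omega) fun r hr => ?_
    rw [hsymm 1 r (by omega)]
    congr 1
    omega
  · rw [show 2 * ℓ - (2 * k + 1) = 2 * (ℓ - 1 - k) + 1 by omega, iDP_two_mul_add_one,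
      iDP_two_mul_add_one, iDP_two_mul_eq_sq_mul hodd hv1,
      ← prod_range_mul_prod_range_sub_of_symm (fun r => iDPFactor v (2 * r + 2))
        (show k ≤ ℓ - 1 by omega) fun r hr => ?_]
    · ring
    · rw [hsymm 2 r (by omega)]
      congr 1
      omega

/-- Second identity of Lemma 7.3 (lem:prodBB): for an odd `ℓ ≥ 3`, a primitive `ℓ`-th
root of unity `v`, and `0 ≤ a ≤ 2ℓ`, one has `P_a · P_{2ℓ-a} = P_{2ℓ}` in `ℂ[x]`
(i.e. `B_i^{[a]} B_i^{[2ℓ-a]} = B_i^{[2ℓ]}` in the split rank-one iquantum group at `v`). -/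
theorem iDP_mul_self_two_ell (ℓ : ℕ) (hodd : Odd ℓ) (hl : 3 ≤ ℓ) (v : ℂ)
    (hv : IsPrimitiveRoot v ℓ) (a : ℕ) (ha : a ≤ 2 * ℓ) :
    iDP v a * iDP v (2 * ℓ - a) = iDP v (2 * ℓ) :=
  iDP_mul_self_two_ell_general ℓ hodd v hv a ha
end

section
/- Let ℓ ≥ 3 be an odd integer, let v ∈ C be a primitive ℓ-th root of unity, and let k ≥ 0 be an integer. Then in the polynomial ring C[x] one has P_{kℓ}(x) = ( P_ℓ(x) )^k, where P_m are the idivided-power polynomials at v. (This is the identity B_i^{[kℓ]} = (B_i^{[ℓ]})^k in the split rank-one iquantum group at v, asserted in Section 3 of the paper via Lemma 3.2 / le:bkl, where B_i generates a free polynomial algebra and B_i^{[m]} = P_m(B_i).) -/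
open Polynomial

/-- auxiliary factor polynomial -/
noncomputable def fP (v : ℂ) (n : ℕ) : Polynomial ℂ :=
  X ^ 2 + C ((v - v⁻¹) ^ 2 * qInt v n ^ 2)

lemma iDP_def (v : ℂ) (m : ℕ) : iDP v m =
    if m % 2 = 0 then ∏ r ∈ Finset.range (m / 2), fP v (2 * r + 1)
    else X * ∏ r ∈ Finset.range (m / 2), fP v (2 * r + 2) := rfl

lemma qInt_mod {v : ℂ} {ℓ : ℕ} (hv1 : v ^ ℓ = 1) (n : ℕ) : qInt v (n % ℓ) = qInt v n := by
  have hv1' : v⁻¹ ^ ℓ = 1 := by rw [inv_pow, hv1, inv_one]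
  have h1 : v ^ n = v ^ (n % ℓ) := by
    conv_lhs => rw [← Nat.mod_add_div n ℓ, pow_add, pow_mul, hv1, one_pow, mul_one]
  have h2 : v⁻¹ ^ n = v⁻¹ ^ (n % ℓ) := by
    conv_lhs => rw [← Nat.mod_add_div n ℓ, pow_add, pow_mul, hv1', one_pow, mul_one]
  unfold qInt
  rw [h1, h2]

lemma qInt_reflect {v : ℂ} {ℓ : ℕ} (hv1 : v ^ ℓ = 1) {j : ℕ} (hj : j ≤ ℓ) :
    qInt v (ℓ - j) = - qInt v j := by
  have h1 : v ^ (ℓ - j) = v⁻¹ ^ j := by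
    have h : v ^ (ℓ - j) * v ^ j = 1 := by rw [← pow_add, Nat.sub_add_cancel hj, hv1]
    rw [inv_pow]
    exact eq_inv_of_mul_eq_one_left h
  have h2 : v⁻¹ ^ (ℓ - j) = v ^ j := by
    rw [inv_pow, h1, inv_pow, inv_inv]
  unfold qInt
  rw [h1, h2, ← neg_div, neg_sub]

lemma fP_mod {v : ℂ} {ℓ : ℕ} (hv1 : v ^ ℓ = 1) (n : ℕ) : fP v (n % ℓ) = fP v n := by
  unfold fP; rw [qInt_mod hv1]

lemma fP_reflect {v : ℂ} {ℓ : ℕ} (hv1 : v ^ ℓ = 1) {j : ℕ} (hj : j ≤ ℓ) :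
    fP v (ℓ - j) = fP v j := by
  unfold fP; rw [qInt_reflect hv1 hj, neg_sq]

lemma fP_zero (v : ℂ) : fP v 0 = X ^ 2 := by
  simp [fP, qInt]

lemma range_prod_zmod {ℓ : ℕ} [NeZero ℓ] (G : ZMod ℓ → Polynomial ℂ) :
    ∏ r ∈ Finset.range ℓ, G (r : ZMod ℓ) = ∏ z : ZMod ℓ, G z := by
  refine Finset.prod_bij' (fun r _ => (r : ZMod ℓ)) (fun z _ => z.val)
    (fun a ha => Finset.mem_univ _) (fun z _ => Finset.mem_range.2 (ZMod.val_lt z))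
    (fun a ha => ZMod.val_natCast_of_lt (Finset.mem_range.1 ha))
    (fun z _ => ZMod.natCast_rightInverse z) (fun a _ => rfl)

lemma prod_range_two_mul {M : Type*} [CommMonoid M] (s : ℕ) (g : ℕ → M) :
    ∏ i ∈ Finset.range (2 * s), g i = ∏ r ∈ Finset.range s, (g (2 * r) * g (2 * r + 1)) := by
  induction s with
  | zero => simp
  | succ n ih =>
    rw [Nat.mul_succ, Finset.prod_range_add, ih, Finset.prod_range_succ]
    simp [Finset.prod_range_succ, mul_assoc]

lemma prod_range_fP {v : ℂ} {ℓ : ℕ} (hv1 : v ^ ℓ = 1) (hodd : Odd ℓ) :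
    ∏ j ∈ Finset.range ℓ, fP v j = (iDP v ℓ) ^ 2 := by
  obtain ⟨s, hs⟩ := hodd
  have hsl : ℓ = 2 * s + 1 := by omega
  have hmod : ℓ % 2 = 1 := by omega
  have hdiv : ℓ / 2 = s := by omega
  have hiDP : iDP v ℓ = X * ∏ r ∈ Finset.range s, fP v (2 * r + 2) := by
    rw [iDP_def, hmod, hdiv]; simp
  have hstep : ∀ r ∈ Finset.range s, fP v (2 * r + 1) = fP v (2 * (s - 1 - r) + 2) := by
    intro r hr
    have hr' : r < s := Finset.mem_range.1 hr
    have h1 : 2 * (s - 1 - r) + 2 = ℓ - (2 * r + 1) := by omega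
    rw [h1, fP_reflect hv1 (by omega)]
  calc ∏ j ∈ Finset.range ℓ, fP v j
      = (∏ i ∈ Finset.range (2 * s), fP v (i + 1)) * fP v 0 := by
        rw [hsl, Finset.prod_range_succ']
    _ = (∏ r ∈ Finset.range s, (fP v (2 * r + 1) * fP v (2 * r + 2))) * X ^ 2 := by
        rw [prod_range_two_mul s (fun i => fP v (i + 1)), fP_zero]
    _ = ((∏ r ∈ Finset.range s, fP v (2 * r + 1)) *
          ∏ r ∈ Finset.range s, fP v (2 * r + 2)) * X ^ 2 := by
        rw [Finset.prod_mul_distrib]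
    _ = ((∏ r ∈ Finset.range s, fP v (2 * r + 2)) *
          ∏ r ∈ Finset.range s, fP v (2 * r + 2)) * X ^ 2 := by
        rw [Finset.prod_congr rfl hstep,
          Finset.prod_range_reflect (fun r => fP v (2 * r + 2)) s]
    _ = (iDP v ℓ) ^ 2 := by rw [hiDP]; ring

lemma block_prod {v : ℂ} {ℓ : ℕ} (hv1 : v ^ ℓ = 1) (hodd : Odd ℓ) (hpos : 0 < ℓ) (b : ℕ) :
    ∏ r ∈ Finset.range ℓ, fP v (2 * r + b) = (iDP v ℓ) ^ 2 := by
  haveI : NeZero ℓ := ⟨hpos.ne'⟩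
  set G : ZMod ℓ → Polynomial ℂ := fun z => fP v z.val with hGdef
  have hG : ∀ n : ℕ, fP v n = G ((n : ℕ) : ZMod ℓ) := by
    intro n
    simp only [hGdef, ZMod.val_natCast]
    rw [fP_mod hv1]
  have h2u : IsUnit (2 : ZMod ℓ) := by
    have hc : Nat.Coprime 2 ℓ := Nat.coprime_two_left.2 hodd
    refine ⟨ZMod.unitOfCoprime 2 hc, ?_⟩
    rw [ZMod.coe_unitOfCoprime]; norm_num
  have hbij : Function.Bijective (fun z : ZMod ℓ => 2 * z + (b : ZMod ℓ)) := by
    have := (Equiv.addRight ((b : ZMod ℓ))).bijective.comp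
      (IsUnit.isUnit_iff_mulLeft_bijective.mp h2u)
    exact this
  calc ∏ r ∈ Finset.range ℓ, fP v (2 * r + b)
      = ∏ r ∈ Finset.range ℓ, G (2 * (r : ZMod ℓ) + (b : ZMod ℓ)) := by
        refine Finset.prod_congr rfl fun r _ => ?_
        rw [hG (2 * r + b)]; push_cast; ring_nf
    _ = ∏ z : ZMod ℓ, G (2 * z + (b : ZMod ℓ)) :=
        range_prod_zmod (fun z => G (2 * z + (b : ZMod ℓ)))
    _ = ∏ z : ZMod ℓ, G z :=
        Fintype.prod_bijective _ hbij _ G (fun z => rfl)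
    _ = ∏ j ∈ Finset.range ℓ, fP v j := by
        rw [← range_prod_zmod G]
        exact Finset.prod_congr rfl fun j _ => (hG j).symm
    _ = (iDP v ℓ) ^ 2 := prod_range_fP hv1 hodd

lemma iDP_add_two_mul {v : ℂ} {ℓ : ℕ} (hv1 : v ^ ℓ = 1) (hodd : Odd ℓ) (hpos : 0 < ℓ)
    (m : ℕ) : iDP v (m + 2 * ℓ) = iDP v m * (iDP v ℓ) ^ 2 := by
  have hmod : (m + 2 * ℓ) % 2 = m % 2 := by omega
  have hdiv : (m + 2 * ℓ) / 2 = m / 2 + ℓ := by omega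
  rw [iDP_def v (m + 2 * ℓ), iDP_def v m, hmod, hdiv]
  rcases Nat.even_or_odd m with he | ho
  · have h0 : m % 2 = 0 := Nat.even_iff.1 he
    rw [if_pos h0, if_pos h0, Finset.prod_range_add]
    congr 1
    calc ∏ r ∈ Finset.range ℓ, fP v (2 * (m / 2 + r) + 1)
        = ∏ r ∈ Finset.range ℓ, fP v (2 * r + (2 * (m / 2) + 1)) := by
          refine Finset.prod_congr rfl fun r _ => ?_; ring_nf
      _ = (iDP v ℓ) ^ 2 := block_prod hv1 hodd hpos _
  · have h1 : ¬ (m % 2 = 0) := by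
      rw [Nat.odd_iff] at ho; omega
    have hB : ∏ r ∈ Finset.range ℓ, fP v (2 * (m / 2 + r) + 2) = (iDP v ℓ) ^ 2 := by
      calc ∏ r ∈ Finset.range ℓ, fP v (2 * (m / 2 + r) + 2)
          = ∏ r ∈ Finset.range ℓ, fP v (2 * r + (2 * (m / 2) + 2)) := by
            refine Finset.prod_congr rfl fun r _ => ?_; ring_nf
        _ = (iDP v ℓ) ^ 2 := block_prod hv1 hodd hpos _
    rw [if_neg h1, if_neg h1, Finset.prod_range_add, hB]
    ring

/-- The identity `B_i^{[kℓ]} = (B_i^{[ℓ]})^k` (Lemma 3.2 / le:bkl of the paper):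
for an odd `ℓ ≥ 3`, a primitive `ℓ`-th root of unity `v`, and any `k ≥ 0`,
one has `P_{kℓ} = (P_ℓ)^k` in `ℂ[x]`. -/
theorem iDP_mul_ell_pow (ℓ : ℕ) (hodd : Odd ℓ) (hl : 3 ≤ ℓ) (v : ℂ)
    (hv : IsPrimitiveRoot v ℓ) (k : ℕ) :
    iDP v (k * ℓ) = (iDP v ℓ) ^ k := by
  have hv1 : v ^ ℓ = 1 := hv.pow_eq_one
  have hpos : 0 < ℓ := by omega
  induction k using Nat.twoStepInduction with
  | zero => simp [iDP]
  | one => rw [one_mul, pow_one]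
  | more n ih _ =>
    have h : (n + 2) * ℓ = n * ℓ + 2 * ℓ := by ring
    rw [h, iDP_add_two_mul hv1 hodd hpos, ih, ← pow_add]
end
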